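/- arXiv:2207.07038 — 4 statements merged into one kernel-verified Lean document; each statement's English description precedes it below -/
import Mathlib

section
/- Let K be a natural number and let T_0, T_1, ..., T_K be real-valued random variables on a common probability space whose joint distribution is exchangeable (invariant under every permutation of the indices 0, 1, ..., K). Define the empirical p-value p̂ = (1 + #{k ∈ {1,...,K} : T_k ≥ T_0}) / (K + 1). Then for every α ∈ [0, 1], the probability that p̂ ≤ α is at most α. -/
open MeasureTheory ProbabilityTheory
open scoped ENNReal

namespace ShaplitAux

/-- The number of indices `k ≠ j` with `x j ≤ x k`. -/
noncomputable def N {K : ℕ} (j : Fin (K + 1)) (x : Fin (K + 1) → ℝ) : ℕ :=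
  (Finset.univ.filter (fun k => k ≠ j ∧ x j ≤ x k)).card

lemma measurable_N {K : ℕ} (j : Fin (K + 1)) : Measurable (N j) := by
  have h : N j = fun x => ∑ k : Fin (K + 1), if k ≠ j ∧ x j ≤ x k then 1 else 0 := by
    funext x; rw [N, Finset.card_filter]
  rw [h]
  apply Finset.measurable_sum
  intro k _
  by_cases hk : k = j
  · simp only [hk, ne_eq, not_true_eq_false, false_and, if_false]
    exact measurable_const
  · have h2 : (fun x : Fin (K + 1) → ℝ => if k ≠ j ∧ x j ≤ x k then (1 : ℕ) else 0)
        = fun x => if x j ≤ x k then 1 else 0 := by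
      funext x; simp [hk]
    rw [h2]
    exact Measurable.ite (measurableSet_le (measurable_pi_apply j) (measurable_pi_apply k))
      measurable_const measurable_const

lemma card_small_le {K m : ℕ} (x : Fin (K + 1) → ℝ) :
    (Finset.univ.filter (fun j => N j x ≤ m)).card ≤ m + 1 := by
  set S := Finset.univ.filter (fun j => N j x ≤ m) with hS
  rcases S.eq_empty_or_nonempty with h | h
  · simp [h]
  · obtain ⟨j, hjS, hjmin⟩ := S.exists_min_image x h
    have hsub : S.erase j ⊆ Finset.univ.filter (fun k => k ≠ j ∧ x j ≤ x k) := by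
      intro k hk
      rw [Finset.mem_erase] at hk
      simp only [Finset.mem_filter, Finset.mem_univ, true_and]
      exact ⟨hk.1, hjmin k hk.2⟩
    have hNj : N j x ≤ m := (Finset.mem_filter.mp hjS).2
    have h1 : S.card - 1 ≤ m := by
      calc S.card - 1 = (S.erase j).card := (Finset.card_erase_of_mem hjS).symm
        _ ≤ _ := Finset.card_le_card hsub
        _ = N j x := rfl
        _ ≤ m := hNj
    have h2 : 1 ≤ S.card := Finset.card_pos.mpr h
    omega

lemma N_comp_perm {K : ℕ} (σ : Equiv.Perm (Fin (K + 1))) (j : Fin (K + 1))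
    (x : Fin (K + 1) → ℝ) :
    N j (fun i => x (σ i)) = N (σ j) x := by
  unfold N
  apply Finset.card_bij (fun k _ => σ k)
  · intro k hk
    simp only [Finset.mem_filter, Finset.mem_univ, true_and, ne_eq] at *
    exact ⟨fun h => hk.1 (σ.injective h), hk.2⟩
  · intro a _ b _ hab; exact σ.injective hab
  · intro b hb
    simp only [Finset.mem_filter, Finset.mem_univ, true_and, ne_eq] at *
    refine ⟨σ.symm b, ⟨fun h => hb.1 ?_, ?_⟩, by simp⟩
    · rw [← h]; simp
    · simpa using hb.2

end ShaplitAux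

open ShaplitAux

/-- Validity of the rank-based (SHAPLIT/CRT-style) p-value: if the joint distribution of
`T 0, T 1, ..., T K` is exchangeable, then the empirical p-value
`p̂ = (1 + #{k ∈ {1,...,K} : T k ≥ T 0}) / (K + 1)` satisfies `P[p̂ ≤ α] ≤ α`
for every `α ∈ [0, 1]`. -/
theorem shaplit_p_value_validity
    {Ω : Type*} [MeasurableSpace Ω] (μ : Measure Ω) [IsProbabilityMeasure μ]
    (K : ℕ) (T : Fin (K + 1) → Ω → ℝ) (hT : ∀ i, Measurable (T i))
    (hexch : ∀ σ : Equiv.Perm (Fin (K + 1)),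
      Measure.map (fun ω => fun i => T (σ i) ω) μ
        = Measure.map (fun ω => fun i => T i ω) μ) :
    ∀ α ∈ Set.Icc (0 : ℝ) 1,
      μ {ω | (1 + ((Finset.univ.filter
            (fun k : Fin (K + 1) => k ≠ 0 ∧ T 0 ω ≤ T k ω)).card : ℝ)) / (K + 1) ≤ α}
        ≤ ENNReal.ofReal α := by
  intro α hα
  obtain ⟨hα0, hα1⟩ := hα
  have hK1pos : (0 : ℝ) < (K : ℝ) + 1 := by positivity
  by_cases hcase : α * ((K : ℝ) + 1) < 1
  · -- event is empty
    have hempty : {ω | (1 + ((Finset.univ.filter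
          (fun k : Fin (K + 1) => k ≠ 0 ∧ T 0 ω ≤ T k ω)).card : ℝ)) / (K + 1) ≤ α} = ∅ := by
      ext ω
      simp only [Set.mem_setOf_eq, Set.mem_empty_iff_false, iff_false, not_le]
      rw [lt_div_iff₀ hK1pos]
      have hc : (0 : ℝ) ≤ ((Finset.univ.filter
          (fun k : Fin (K + 1) => k ≠ 0 ∧ T 0 ω ≤ T k ω)).card : ℝ) := by positivity
      nlinarith
    rw [hempty]
    simp
  push_neg at hcase
  -- m + 1 = ⌊α (K+1)⌋₊
  set m : ℕ := ⌊α * ((K : ℝ) + 1)⌋₊ - 1 with hm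
  have hfloor1 : 1 ≤ ⌊α * ((K : ℝ) + 1)⌋₊ := by
    rw [Nat.one_le_iff_ne_zero, ← Nat.pos_iff_ne_zero]
    exact Nat.floor_pos.mpr hcase
  have hm1 : m + 1 = ⌊α * ((K : ℝ) + 1)⌋₊ := by omega
  have hmle : ((m : ℝ) + 1) ≤ α * ((K : ℝ) + 1) := by
    have : ((m + 1 : ℕ) : ℝ) ≤ α * ((K : ℝ) + 1) := by
      rw [hm1]; exact Nat.floor_le (by nlinarith)
    push_cast at this; linarith
  -- the measurable sets in path space
  set A : Fin (K + 1) → Set (Fin (K + 1) → ℝ) := fun j => {x | N j x ≤ m} with hA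
  have hAmeas : ∀ j, MeasurableSet (A j) := fun j =>
    measurable_N j (measurableSet_Iic (α := ℕ) (a := m))
  set g : Ω → Fin (K + 1) → ℝ := fun ω i => T i ω with hg
  have hgmeas : Measurable g := measurable_pi_lambda _ (fun i => hT i)
  -- all preimage measures equal
  have hmap : ∀ j : Fin (K + 1), μ (g ⁻¹' A j) = μ (g ⁻¹' A 0) := by
    intro j
    set σ : Equiv.Perm (Fin (K + 1)) := Equiv.swap 0 j with hσ
    have hfmeas : Measurable (fun ω => fun i => T (σ i) ω) :=
      measurable_pi_lambda _ (fun i => hT (σ i))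
    have h1 := congrArg (fun ν => ν (A 0)) (hexch σ)
    rw [Measure.map_apply hfmeas (hAmeas 0), Measure.map_apply hgmeas (hAmeas 0)] at h1
    have hpre : (fun ω => fun i => T (σ i) ω) ⁻¹' A 0 = g ⁻¹' A j := by
      ext ω
      simp only [Set.mem_preimage, hA, Set.mem_setOf_eq]
      have hNc : N 0 (fun i => T (σ i) ω) = N (σ 0) (g ω) := N_comp_perm σ 0 (g ω)
      rw [show (fun i => T (σ i) ω) = (fun i => g ω (σ i)) from rfl, N_comp_perm σ 0 (g ω)]
      have : σ 0 = j := Equiv.swap_apply_left 0 j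
      rw [this]
    rw [hpre] at h1
    exact h1
  -- sum bound
  have hsum : ∑ j : Fin (K + 1), μ (g ⁻¹' A j) ≤ ((m : ℝ≥0∞) + 1) := by
    have h1 : ∀ j : Fin (K + 1), μ (g ⁻¹' A j)
        = ∫⁻ ω, (g ⁻¹' A j).indicator (fun _ => (1 : ℝ≥0∞)) ω ∂μ := by
      intro j
      exact (lintegral_indicator_one (hgmeas (hAmeas j))).symm
    calc ∑ j : Fin (K + 1), μ (g ⁻¹' A j)
        = ∑ j : Fin (K + 1), ∫⁻ ω, (g ⁻¹' A j).indicator (fun _ => (1 : ℝ≥0∞)) ω ∂μ := by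
          exact Finset.sum_congr rfl (fun j _ => h1 j)
      _ = ∫⁻ ω, ∑ j : Fin (K + 1), (g ⁻¹' A j).indicator (fun _ => (1 : ℝ≥0∞)) ω ∂μ := by
          rw [lintegral_finset_sum]
          intro j _
          exact (measurable_const.indicator (hgmeas (hAmeas j)))
      _ ≤ ∫⁻ _, ((m : ℝ≥0∞) + 1) ∂μ := by
          apply lintegral_mono
          intro ω
          dsimp only
          have : ∑ j : Fin (K + 1), (g ⁻¹' A j).indicator (fun _ => (1 : ℝ≥0∞)) ω
              = ((Finset.univ.filter (fun j : Fin (K + 1) => N j (g ω) ≤ m)).card : ℝ≥0∞) := by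
            rw [Finset.card_filter]
            push_cast
            apply Finset.sum_congr rfl
            intro j _
            simp only [Set.indicator_apply, Set.mem_preimage, hA, Set.mem_setOf_eq]
            split <;> simp_all
          rw [this]
          have hcard := card_small_le (K := K) (m := m) (g ω)
          calc ((Finset.univ.filter (fun j : Fin (K + 1) => N j (g ω) ≤ m)).card : ℝ≥0∞)
              ≤ ((m + 1 : ℕ) : ℝ≥0∞) := by exact_mod_cast hcard
            _ = (m : ℝ≥0∞) + 1 := by push_cast; ring
      _ = ((m : ℝ≥0∞) + 1) := by
          rw [lintegral_const, measure_univ, mul_one]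
  have hsum2 : ((K : ℝ≥0∞) + 1) * μ (g ⁻¹' A 0) ≤ (m : ℝ≥0∞) + 1 := by
    have : ∑ j : Fin (K + 1), μ (g ⁻¹' A j) = ((K : ℝ≥0∞) + 1) * μ (g ⁻¹' A 0) := by
      rw [Finset.sum_congr rfl (fun j _ => hmap j), Finset.sum_const, Finset.card_univ,
        Fintype.card_fin]
      simp [nsmul_eq_mul]
    rw [← this]
    exact hsum
  -- event inclusion
  have hincl : {ω | (1 + ((Finset.univ.filter
        (fun k : Fin (K + 1) => k ≠ 0 ∧ T 0 ω ≤ T k ω)).card : ℝ)) / (K + 1) ≤ α}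
      ⊆ g ⁻¹' A 0 := by
    intro ω hω
    simp only [Set.mem_setOf_eq] at hω
    rw [div_le_iff₀ hK1pos] at hω
    have hNω : N 0 (g ω) = (Finset.univ.filter
        (fun k : Fin (K + 1) => k ≠ 0 ∧ T 0 ω ≤ T k ω)).card := rfl
    simp only [Set.mem_preimage, hA, Set.mem_setOf_eq]
    rw [hNω]
    have hle : ((Finset.univ.filter
        (fun k : Fin (K + 1) => k ≠ 0 ∧ T 0 ω ≤ T k ω)).card : ℝ) + 1 ≤ α * ((K : ℝ) + 1) := by
      linarith
    have : (Finset.univ.filter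
        (fun k : Fin (K + 1) => k ≠ 0 ∧ T 0 ω ≤ T k ω)).card + 1 ≤ ⌊α * ((K : ℝ) + 1)⌋₊ := by
      apply Nat.le_floor
      push_cast
      linarith
    omega
  -- conclude
  have hfinal : μ (g ⁻¹' A 0) ≤ ENNReal.ofReal α := by
    have hK1ne : ((K : ℝ≥0∞) + 1) ≠ 0 := by simp
    have hK1nt : ((K : ℝ≥0∞) + 1) ≠ ⊤ := by
      simp [ENNReal.add_ne_top]
    have hdiv : μ (g ⁻¹' A 0) ≤ ((m : ℝ≥0∞) + 1) / ((K : ℝ≥0∞) + 1) := by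
      rw [ENNReal.le_div_iff_mul_le (Or.inl hK1ne) (Or.inl hK1nt), mul_comm]
      exact hsum2
    refine hdiv.trans ?_
    rw [ENNReal.div_le_iff hK1ne hK1nt]
    have h1 : (m : ℝ≥0∞) + 1 = ENNReal.ofReal ((m : ℝ) + 1) := by
      rw [ENNReal.ofReal_add (by positivity) (by norm_num)]
      simp [ENNReal.ofReal_natCast]
    have h2 : ENNReal.ofReal α * ((K : ℝ≥0∞) + 1) = ENNReal.ofReal (α * ((K : ℝ) + 1)) := by
      rw [ENNReal.ofReal_mul hα0]
      congr 1
      rw [ENNReal.ofReal_add (by positivity) (by norm_num)]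
      simp [ENNReal.ofReal_natCast]
    rw [h1, h2]
    exact ENNReal.ofReal_le_ofReal hmle
  exact (measure_mono hincl).trans hfinal
end

section
/- Let n ≥ 1, fix j ∈ [n] = {1,...,n}, and for each subset C ⊆ [n]∖{j} let w_C = |C|!·(n-|C|-1)!/n!. Let γ : subsets of [n]∖{j} → ℝ satisfy γ_C ≤ 1 for all C, let p : subsets of [n]∖{j} → ℝ satisfy p_C ≤ 1 - γ_C for all C, and suppose ∑_{C ⊆ [n]∖{j}} w_C · γ_C ≥ 1 - ε for some 0 ≤ ε ≤ 1. Then for every C ⊆ [n]∖{j}, p_C ≤ 1 - (w̃ - ε)/w̃ = ε/w̃, where w̃ = min_{C ⊆ [n]∖{j}} w_C. -/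
/-- The Shapley weight `w_C = |C|! (n - |C| - 1)! / n!` of a coalition `C`. -/
noncomputable def shapleyWeight (n : ℕ) (C : Finset (Fin n)) : ℝ :=
  ((Nat.factorial C.card * Nat.factorial (n - C.card - 1) : ℕ) : ℝ) / (Nat.factorial n : ℝ)

lemma sum_shapleyWeight (n : ℕ) (hn : 1 ≤ n) (j : Fin n) :
    ∑ C ∈ (Finset.univ.erase j).powerset, shapleyWeight n C = 1 := by
  have hcard : (Finset.univ.erase j).card = n - 1 := by
    rw [Finset.card_erase_of_mem (Finset.mem_univ j), Finset.card_univ, Fintype.card_fin]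
  have h := Finset.sum_powerset_apply_card
    (f := fun k => ((Nat.factorial k * Nat.factorial (n - k - 1) : ℕ) : ℝ) / (Nat.factorial n : ℝ))
    (x := Finset.univ.erase j)
  rw [show (∑ C ∈ (Finset.univ.erase j).powerset, shapleyWeight n C) =
      ∑ C ∈ (Finset.univ.erase j).powerset,
        ((Nat.factorial C.card * Nat.factorial (n - C.card - 1) : ℕ) : ℝ) / (Nat.factorial n : ℝ)
    from rfl, h, hcard]
  have key : ∀ m ∈ Finset.range (n - 1 + 1),
      (n-1).choose m • (((Nat.factorial m * Nat.factorial (n - m - 1) : ℕ) : ℝ) / (Nat.factorial n : ℝ))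
      = ((Nat.factorial (n-1) : ℕ) : ℝ) / (Nat.factorial n : ℝ) := by
    intro m hm
    rw [Finset.mem_range, Nat.lt_succ_iff] at hm
    have hsub : n - m - 1 = n - 1 - m := by omega
    have : (n-1).choose m * (Nat.factorial m * Nat.factorial (n - m - 1)) = Nat.factorial (n-1) := by
      rw [hsub, ← mul_assoc]
      exact Nat.choose_mul_factorial_mul_factorial hm
    rw [nsmul_eq_mul, ← this]
    push_cast
    ring
  rw [Finset.sum_congr rfl key, Finset.sum_const, Finset.card_range,
    show n - 1 + 1 = n from by omega, nsmul_eq_mul]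
  have hfac : (Nat.factorial n : ℝ) = n * Nat.factorial (n - 1) := by
    exact_mod_cast (Nat.mul_factorial_pred (Nat.one_le_iff_ne_zero.mp hn)).symm
  have hn0 : (0:ℝ) < n := by exact_mod_cast hn
  have hf0 : (0:ℝ) < Nat.factorial (n-1) := by exact_mod_cast Nat.factorial_pos _
  rw [hfac]
  field_simp

/-- Corollary 1 of the paper: if each `γ C ≤ 1`, each `p C ≤ 1 - γ C`, and the Shapley value
`∑ C, w_C γ_C ≥ 1 - ε` for some `0 ≤ ε ≤ 1`, then every p-value satisfies
`p C ≤ 1 - (w̃ - ε)/w̃ = ε/w̃`, where `w̃` is the minimal Shapley weight. -/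
theorem shaplit_all_p_values_small (n : ℕ) (hn : 1 ≤ n) (j : Fin n)
    (γ p : Finset (Fin n) → ℝ) (ε : ℝ) (hε0 : 0 ≤ ε) (hε1 : ε ≤ 1)
    (hγ : ∀ C ∈ (Finset.univ.erase j).powerset, γ C ≤ 1)
    (hp : ∀ C ∈ (Finset.univ.erase j).powerset, p C ≤ 1 - γ C)
    (hφ : 1 - ε ≤ ∑ C ∈ (Finset.univ.erase j).powerset, shapleyWeight n C * γ C) :
    ∀ C ∈ (Finset.univ.erase j).powerset,
      p C ≤ 1 - ((Finset.univ.erase j).powerset.inf' (Finset.powerset_nonempty _)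
              (shapleyWeight n) - ε)
            / (Finset.univ.erase j).powerset.inf' (Finset.powerset_nonempty _)
              (shapleyWeight n) ∧
      1 - ((Finset.univ.erase j).powerset.inf' (Finset.powerset_nonempty _)
              (shapleyWeight n) - ε)
            / (Finset.univ.erase j).powerset.inf' (Finset.powerset_nonempty _)
              (shapleyWeight n)
        = ε / (Finset.univ.erase j).powerset.inf' (Finset.powerset_nonempty _)
              (shapleyWeight n) := by
  intro C hC
  set S := (Finset.univ.erase j).powerset with hS
  set w := S.inf' (Finset.powerset_nonempty _) (shapleyWeight n) with hw
  have hwpos : ∀ D : Finset (Fin n), 0 < shapleyWeight n D := by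
    intro D
    apply div_pos
    · exact_mod_cast Nat.mul_pos (Nat.factorial_pos _) (Nat.factorial_pos _)
    · exact_mod_cast Nat.factorial_pos _
  have hw0 : 0 < w := by
    rw [hw, Finset.lt_inf'_iff]
    exact fun D _ => hwpos D
  have heq : 1 - (w - ε) / w = ε / w := by
    field_simp
    ring
  refine ⟨?_, heq⟩
  rw [heq]
  -- key: shapleyWeight n C * (1 - γ C) ≤ ε
  have hterm : ∀ D ∈ S, 0 ≤ shapleyWeight n D * (1 - γ D) := fun D hD =>
    mul_nonneg (hwpos D).le (by linarith [hγ D hD])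
  have hsum : ∑ D ∈ S, shapleyWeight n D * (1 - γ D) ≤ ε := by
    have := sum_shapleyWeight n hn j
    have hexp : ∑ D ∈ S, shapleyWeight n D * (1 - γ D)
        = (∑ D ∈ S, shapleyWeight n D) - ∑ D ∈ S, shapleyWeight n D * γ D := by
      rw [← Finset.sum_sub_distrib]
      exact Finset.sum_congr rfl fun D _ => by ring
    rw [hexp, this]
    linarith
  have hkey : shapleyWeight n C * (1 - γ C) ≤ ε :=
    le_trans (Finset.single_le_sum hterm hC) hsum
  have hwle : w ≤ shapleyWeight n C := Finset.inf'_le _ hC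
  have h1 : w * (1 - γ C) ≤ ε := by
    rcases le_or_gt (1 - γ C) 0 with h | h
    · calc w * (1 - γ C) ≤ 0 := mul_nonpos_of_nonneg_of_nonpos hw0.le h
        _ ≤ ε := hε0
    · calc w * (1 - γ C) ≤ shapleyWeight n C * (1 - γ C) :=
          mul_le_mul_of_nonneg_right hwle h.le
        _ ≤ ε := hkey
  have := hp C hC
  calc p C ≤ 1 - γ C := this
    _ ≤ ε / w := by rw [le_div_iff₀ hw0]; linarith [h1, mul_comm w (1 - γ C)]
end

section
/- Let k ≥ 1 and let p_1, ..., p_k be nonnegative real-valued random variables on a common probability space such that, for each i and every α ∈ [0, 1], P[p_i ≤ α] ≤ α. Let w_1, ..., w_k be nonnegative reals with ∑_i w_i = 1 and max_i w_i ≤ 1/2. Then for every α ∈ [0, 1], P[2 · ∑_{i=1}^k w_i p_i ≤ α] ≤ α; that is, twice the weighted arithmetic mean of valid p-values is again a valid p-value. -/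
open MeasureTheory ProbabilityTheory

lemma ofReal_sum_le' {ι : Type*} (s : Finset ι) (f : ι → ℝ) :
    ENNReal.ofReal (∑ i ∈ s, f i) ≤ ∑ i ∈ s, ENNReal.ofReal (f i) := by
  classical
  induction s using Finset.induction with
  | empty => simp
  | insert a s h ih =>
    rw [Finset.sum_insert h, Finset.sum_insert h]
    exact le_trans (ENNReal.ofReal_add_le) (by gcongr)

lemma key_lintegral_bound {Ω : Type*} [MeasurableSpace Ω] (μ : Measure Ω)
    [IsProbabilityMeasure μ] (q : Ω → ℝ) (hq : Measurable q) (hqn : ∀ ω, 0 ≤ q ω)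
    (hv : ∀ β ∈ Set.Icc (0 : ℝ) 1, μ {ω | q ω ≤ β} ≤ ENNReal.ofReal β)
    (α : ℝ) (hα0 : 0 ≤ α) (hα1 : α ≤ 1) :
    ∫⁻ ω, ENNReal.ofReal (α - q ω) ∂μ ≤ ENNReal.ofReal (α ^ 2 / 2) := by
  have hmax : ∀ x : ℝ, ENNReal.ofReal x = ENNReal.ofReal (max x 0) := by
    intro x
    rcases le_total x 0 with h | h
    · simp [max_eq_right h, ENNReal.ofReal_eq_zero.2 h]
    · simp [max_eq_left h]
  have hfm : Measurable (fun ω => max (α - q ω) 0) :=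
    (measurable_const.sub hq).max measurable_const
  have layer := lintegral_eq_lintegral_meas_lt μ
    (f := fun ω => max (α - q ω) 0)
    (Filter.Eventually.of_forall (fun ω => le_max_right _ _)) hfm.aemeasurable
  calc ∫⁻ ω, ENNReal.ofReal (α - q ω) ∂μ
      = ∫⁻ ω, ENNReal.ofReal (max (α - q ω) 0) ∂μ := by simp_rw [← hmax]
    _ = ∫⁻ t in Set.Ioi (0:ℝ), μ {a | t < max (α - q a) 0} := layer
    _ ≤ ∫⁻ t in Set.Ioi (0:ℝ), ENNReal.ofReal (α - t) := by
        apply setLIntegral_mono (by fun_prop) (fun t ht => ?_)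
        have ht0 : (0:ℝ) < t := ht
        rcases le_total t α with h | h
        · have hsub : {a | t < max (α - q a) 0} ⊆ {ω | q ω ≤ α - t} := by
            intro a ha
            simp only [Set.mem_setOf_eq] at ha ⊢
            have : t < α - q a := by
              rcases max_cases (α - q a) 0 with ⟨he, _⟩ | ⟨he, _⟩
              · rwa [he] at ha
              · rw [he] at ha; exact absurd ha (not_lt.2 ht0.le)
            linarith
          refine le_trans (measure_mono hsub) (hv (α - t) ⟨by linarith, by linarith⟩)
        · have : {a | t < max (α - q a) 0} = ∅ := by
            ext a
            simp only [Set.mem_setOf_eq, Set.mem_empty_iff_false, iff_false, not_lt]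
            exact max_le (by have := hqn a; linarith) ht0.le
          rw [this, measure_empty]
          exact zero_le
    _ ≤ ENNReal.ofReal (α ^ 2 / 2) := by
        have hsplit : Set.Ioc (0:ℝ) α ∪ Set.Ioi α = Set.Ioi 0 := Set.Ioc_union_Ioi_eq_Ioi hα0
        rw [← hsplit, lintegral_union measurableSet_Ioi Set.Ioc_disjoint_Ioi_same]
        have h2 : ∫⁻ t in Set.Ioi α, ENNReal.ofReal (α - t) = 0 := by
          rw [lintegral_eq_zero_iff (by fun_prop)]
          filter_upwards [self_mem_ae_restrict measurableSet_Ioi] with t ht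
          simp only [Set.mem_Ioi] at ht
          simp [ENNReal.ofReal_eq_zero.2 (by linarith : α - t ≤ 0)]
        rw [h2, add_zero]
        have hint : IntegrableOn (fun t => α - t) (Set.Ioc 0 α) volume := by
          have : IntervalIntegrable (fun t => α - t) volume 0 α :=
            (continuous_const.sub continuous_id).intervalIntegrable 0 α
          rwa [intervalIntegrable_iff, Set.uIoc_of_le hα0] at this
        rw [← ofReal_integral_eq_lintegral_ofReal hint
          (by filter_upwards [self_mem_ae_restrict measurableSet_Ioc] with t ht;
              exact sub_nonneg.2 ht.2)]
        apply ENNReal.ofReal_le_ofReal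
        rw [← intervalIntegral.integral_of_le hα0]
        rw [intervalIntegral.integral_sub intervalIntegrable_const
          intervalIntegral.intervalIntegrable_id, intervalIntegral.integral_const,
          integral_id]
        simp only [sub_zero, smul_eq_mul]
        nlinarith

/-- Weighted arithmetic-mean p-value merging (Vovk–Wang, Proposition 9 with `r = 1`):
if `p 1, ..., p k` are nonnegative valid p-values (with no assumption on their dependence),
and the weights `w i` are nonnegative, sum to 1, and each is at most `1/2`, then twice the
weighted arithmetic mean `2 ∑ i, w i * p i` is again a valid p-value. -/
theorem twice_weighted_mean_is_valid_p_value
    {Ω : Type*} [MeasurableSpace Ω] (μ : Measure Ω) [IsProbabilityMeasure μ]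
    (k : ℕ) (hk : 1 ≤ k) (p : Fin k → Ω → ℝ) (hmeas : ∀ i, Measurable (p i))
    (hnonneg : ∀ i ω, 0 ≤ p i ω)
    (hvalid : ∀ i, ∀ α ∈ Set.Icc (0 : ℝ) 1, μ {ω | p i ω ≤ α} ≤ ENNReal.ofReal α)
    (w : Fin k → ℝ) (hw : ∀ i, 0 ≤ w i) (hwsum : ∑ i, w i = 1)
    (hwmax : ∀ i, w i ≤ 1 / 2) :
    ∀ α ∈ Set.Icc (0 : ℝ) 1,
      μ {ω | 2 * ∑ i, w i * p i ω ≤ α} ≤ ENNReal.ofReal α := by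
  rintro α ⟨hα0, hα1⟩
  rcases eq_or_lt_of_le hα0 with rfl | hαpos
  · -- α = 0 case
    obtain ⟨i, hi⟩ : ∃ i, 0 < w i := by
      by_contra h
      push_neg at h
      have : ∑ i, w i ≤ 0 := Finset.sum_nonpos (fun i _ => h i)
      rw [hwsum] at this; linarith
    have hsub : {ω | 2 * ∑ j, w j * p j ω ≤ 0} ⊆ {ω | p i ω ≤ 0} := by
      intro ω hω
      simp only [Set.mem_setOf_eq] at hω ⊢
      have hsum0 : ∑ j, w j * p j ω ≤ 0 := by linarith
      have hterm : w i * p i ω ≤ 0 := by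
        have h1 : w i * p i ω ≤ ∑ j, w j * p j ω := by
          simpa using Finset.single_le_sum (f := fun j => w j * p j ω)
            (fun j _ => mul_nonneg (hw j) (hnonneg j ω)) (Finset.mem_univ i)
        linarith
      nlinarith [hnonneg i ω]
    exact le_trans (measure_mono hsub) (hvalid i 0 ⟨le_refl _, by norm_num⟩)
  · -- α > 0 case
    set F : Ω → ENNReal := fun ω => ∑ i, ENNReal.ofReal (w i) * ENNReal.ofReal (α - p i ω)
      with hF
    have hFmeas : Measurable F := by
      apply Finset.measurable_sum
      intro i _
      exact (ENNReal.measurable_ofReal.comp (measurable_const.sub (hmeas i))).const_mul _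
    have hsub : {ω | 2 * ∑ i, w i * p i ω ≤ α} ⊆ {ω | ENNReal.ofReal (α / 2) ≤ F ω} := by
      intro ω hω
      simp only [Set.mem_setOf_eq] at hω ⊢
      have h1 : α / 2 ≤ α - ∑ i, w i * p i ω := by linarith
      have h2 : α - ∑ i, w i * p i ω = ∑ i, w i * (α - p i ω) := by
        simp_rw [mul_sub]
        rw [Finset.sum_sub_distrib, ← Finset.sum_mul, hwsum, one_mul]
      calc ENNReal.ofReal (α / 2) ≤ ENNReal.ofReal (∑ i, w i * (α - p i ω)) := by
            rw [← h2]; exact ENNReal.ofReal_le_ofReal h1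
        _ ≤ ∑ i, ENNReal.ofReal (w i * (α - p i ω)) := ofReal_sum_le' _ _
        _ = F ω := by
            simp_rw [hF]
            congr 1
            ext i
            rw [ENNReal.ofReal_mul (hw i)]
    have hmarkov := mul_meas_ge_le_lintegral₀ (μ := μ) hFmeas.aemeasurable (ENNReal.ofReal (α / 2))
    have hlint : ∫⁻ ω, F ω ∂μ ≤ ENNReal.ofReal (α ^ 2 / 2) := by
      simp only [hF]
      rw [lintegral_finset_sum Finset.univ
        (f := fun i ω => ENNReal.ofReal (w i) * ENNReal.ofReal (α - p i ω))
        (fun i _ => by fun_prop)]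
      calc ∑ i, ∫⁻ ω, ENNReal.ofReal (w i) * ENNReal.ofReal (α - p i ω) ∂μ
          = ∑ i, ENNReal.ofReal (w i) * ∫⁻ ω, ENNReal.ofReal (α - p i ω) ∂μ := by
            apply Finset.sum_congr rfl
            intro i _
            exact lintegral_const_mul _ (by fun_prop)
        _ ≤ ∑ i, ENNReal.ofReal (w i) * ENNReal.ofReal (α ^ 2 / 2) := by
            gcongr with i
            exact key_lintegral_bound μ (p i) (hmeas i) (hnonneg i) (hvalid i) α hα0 hα1
        _ = ENNReal.ofReal (α ^ 2 / 2) := by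
            rw [← Finset.sum_mul, ← ENNReal.ofReal_sum_of_nonneg (fun i _ => hw i), hwsum]
            simp
    have hfinal : ENNReal.ofReal (α / 2) * μ {ω | 2 * ∑ i, w i * p i ω ≤ α}
        ≤ ENNReal.ofReal (α / 2) * ENNReal.ofReal α := by
      calc ENNReal.ofReal (α / 2) * μ {ω | 2 * ∑ i, w i * p i ω ≤ α}
          ≤ ENNReal.ofReal (α / 2) * μ {ω | ENNReal.ofReal (α / 2) ≤ F ω} :=
            mul_le_mul_right (measure_mono hsub) _
        _ ≤ ∫⁻ ω, F ω ∂μ := hmarkov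
        _ ≤ ENNReal.ofReal (α ^ 2 / 2) := hlint
        _ = ENNReal.ofReal (α / 2) * ENNReal.ofReal α := by
            rw [← ENNReal.ofReal_mul (by linarith)]
            congr 1
            ring
    have h0 : ENNReal.ofReal (α / 2) ≠ 0 := by
      simp only [ne_eq, ENNReal.ofReal_eq_zero, not_le]
      linarith
    exact (ENNReal.mul_le_mul_iff_right h0 ENNReal.ofReal_ne_top).mp hfinal
end

section
/- Let n ≥ 1, fix j ∈ [n] = {1,...,n}, and for C ⊆ [n]∖{j} let w_C = |C|!·(n-|C|-1)!/n! and w̃ = min_{C ⊆ [n]∖{j}} w_C. Let γ, p : subsets of [n]∖{j} → ℝ satisfy γ_C ≤ 1 and p_C ≤ 1 - γ_C for all C, and suppose ∑_{C ⊆ [n]∖{j}} w_C · γ_C ≥ 1 - ε where 0 ≤ ε ≤ α · w̃ / 2^{n-1} for some α ∈ [0, 1]. Then for every C ⊆ [n]∖{j}, p_C ≤ α / 2^{n-1}. -/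
lemma shapleyWeight_pos (n : ℕ) (C : Finset (Fin n)) : 0 < shapleyWeight n C := by
  unfold shapleyWeight
  positivity

/-- Bonferroni-corrected version of Corollary 1: if the Shapley value
`∑ C, w_C γ_C ≥ 1 - ε` with `0 ≤ ε ≤ α wmin / 2^(n-1)` for some `α ∈ [0, 1]`, where `wmin` is
the minimal Shapley weight, then every SHAPLIT p-value `p C ≤ 1 - γ C` is controlled at the
Bonferroni-corrected level `α / 2^(n-1)`. -/
theorem shaplit_bonferroni (n : ℕ) (hn : 1 ≤ n) (j : Fin n)
    (γ p : Finset (Fin n) → ℝ) (α ε : ℝ) (hα0 : 0 ≤ α) (hα1 : α ≤ 1) (hε0 : 0 ≤ ε)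
    (hε : ε ≤ α * ((Finset.univ.erase j).powerset.inf' (Finset.powerset_nonempty _)
            (shapleyWeight n)) / 2 ^ (n - 1))
    (hγ : ∀ C ∈ (Finset.univ.erase j).powerset, γ C ≤ 1)
    (hp : ∀ C ∈ (Finset.univ.erase j).powerset, p C ≤ 1 - γ C)
    (hφ : 1 - ε ≤ ∑ C ∈ (Finset.univ.erase j).powerset, shapleyWeight n C * γ C) :
    ∀ C ∈ (Finset.univ.erase j).powerset, p C ≤ α / 2 ^ (n - 1) := by
  intro C hC
  set wmin := (Finset.univ.erase j).powerset.inf' (Finset.powerset_nonempty _) (shapleyWeight n)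
  have hwminpos : 0 < wmin := by
    rw [Finset.lt_inf'_iff]
    exact fun D _ => shapleyWeight_pos n D
  have hwminle : wmin ≤ shapleyWeight n C := Finset.inf'_le _ hC
  have hwCpos := shapleyWeight_pos n C
  -- key: w_C * (1 - γ C) ≤ ε
  have hkey : shapleyWeight n C * (1 - γ C) ≤ ε := by
    have hsum : ∑ D ∈ (Finset.univ.erase j).powerset, shapleyWeight n D * (1 - γ D)
        = 1 - ∑ D ∈ (Finset.univ.erase j).powerset, shapleyWeight n D * γ D := by
      have h := sum_shapleyWeight n hn j
      calc ∑ D ∈ (Finset.univ.erase j).powerset, shapleyWeight n D * (1 - γ D)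
          = ∑ D ∈ (Finset.univ.erase j).powerset,
              (shapleyWeight n D - shapleyWeight n D * γ D) :=
            Finset.sum_congr rfl fun D _ => by ring
        _ = ∑ D ∈ (Finset.univ.erase j).powerset, shapleyWeight n D
              - ∑ D ∈ (Finset.univ.erase j).powerset, shapleyWeight n D * γ D :=
            Finset.sum_sub_distrib _ _
        _ = 1 - ∑ D ∈ (Finset.univ.erase j).powerset, shapleyWeight n D * γ D := by rw [h]
    have hle : ∑ D ∈ (Finset.univ.erase j).powerset, shapleyWeight n D * (1 - γ D) ≤ ε := by
      rw [hsum]; linarith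
    refine le_trans (Finset.single_le_sum (f := fun D => shapleyWeight n D * (1 - γ D))
      (fun D hD => mul_nonneg (shapleyWeight_pos n D).le (by linarith [hγ D hD])) hC) hle
  have h1 : 1 - γ C ≤ ε / shapleyWeight n C :=
    (le_div_iff₀ hwCpos).mpr (by linarith [hkey])
  have h2 : ε / shapleyWeight n C ≤ ε / wmin := by
    apply div_le_div_of_nonneg_left hε0 hwminpos hwminle
  have h3 : ε / wmin ≤ α / 2 ^ (n - 1) := by
    rw [div_le_div_iff₀ hwminpos (by positivity)]
    calc ε * 2 ^ (n - 1) ≤ (α * wmin / 2 ^ (n - 1)) * 2 ^ (n - 1) := by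
          apply mul_le_mul_of_nonneg_right hε (by positivity)
      _ = α * wmin := by field_simp
  exact le_trans (hp C hC) (by linarith)
end
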